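/- arXiv:1706.05431 — 6 statements merged into one kernel-verified Lean document; each statement's English description precedes it below -/
import Mathlib

section
/- Let α, β be non-negative reals and let u₁, u₂, d, e, s, l be non-negative integers with u₁ + u₂ = e + s and 0 ≤ u₁, u₂, s ≤ e. With f as defined in the context, f([u₁, e,…,e, u₂]) ≥ min( f([s, e,…,e]), f([e,…,e, s]) ), where on the left the entry e is repeated l times and on the right it is repeated l+1 times. -/
/-!
Fix the total `c = e + s` of the two outer entries. Every term of `f([x, e, …, e, c - x])` is a
minimum of two affine functions of `x`, so this value is a concave function of `x`. On the interval
`[s, e]`, which contains `u₁`, it is therefore at least its value at one of the two endpoints, and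
these endpoints are exactly the two sequences on the right-hand side.
-/

/-- The cut function `f(u) = ∑ᵢ min(uᵢ·α, (d − ∑_{j<i} uⱼ)·β)`. -/
def cutF (α β : ℝ) (d : ℕ) (u : List ℕ) : ℝ :=
  ∑ i ∈ Finset.range u.length,
    min ((u.getD i 0 : ℝ) * α) (((d : ℝ) - ((u.take i).sum : ℕ)) * β)

open Finset

theorem ConcaveOn.finset_sum {𝕜 E β ι : Type*} [Semiring 𝕜] [PartialOrder 𝕜] [AddCommMonoid E]
    [AddCommMonoid β] [PartialOrder β] [IsOrderedAddMonoid β] [SMul 𝕜 E] [Module 𝕜 β]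
    {s : Set E} (hs : Convex 𝕜 s) (t : Finset ι) {f : ι → E → β}
    (hf : ∀ i ∈ t, ConcaveOn 𝕜 s (f i)) : ConcaveOn 𝕜 s fun x => ∑ i ∈ t, f i x := by
  classical
  induction t using Finset.induction_on with
  | empty => simpa using concaveOn_const 0 hs
  | insert i t hi ih =>
    simp_rw [sum_insert hi]
    exact (hf i (mem_insert_self i t)).add (ih fun j hj => hf j (mem_insert_of_mem hj))

theorem concaveOn_univ_of_affine {𝕜 : Type*} [CommRing 𝕜] [PartialOrder 𝕜] {f : 𝕜 → 𝕜} (m q : 𝕜)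
    (hf : ∀ x, f x = m * x + q) : ConcaveOn 𝕜 Set.univ f :=
  ⟨convex_univ, fun x _ y _ a b _ _ hab => le_of_eq <| by
    simp only [hf, smul_eq_mul]; linear_combination q * hab⟩

/-- `cutF α β d [x, e, …, e, c - x]`, with `l` copies of `e`, as a function of a real `x`. -/
def cutProfile (α β d e c : ℝ) (l : ℕ) (x : ℝ) : ℝ :=
  min (x * α) (d * β) + ∑ j ∈ range l, min (e * α) ((d - (x + j * e)) * β) +
    min ((c - x) * α) ((d - (x + l * e)) * β)

theorem concaveOn_cutProfile (α β d e c : ℝ) (l : ℕ) :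
    ConcaveOn ℝ Set.univ (cutProfile α β d e c l) := by
  have hfirst : ConcaveOn ℝ Set.univ fun x : ℝ => min (x * α) (d * β) :=
    (concaveOn_univ_of_affine α 0 fun x => by ring).inf (concaveOn_const _ convex_univ)
  have hmid : ConcaveOn ℝ Set.univ fun x : ℝ =>
      ∑ j ∈ range l, min (e * α) ((d - (x + j * e)) * β) :=
    ConcaveOn.finset_sum convex_univ _ fun j _ => (concaveOn_const _ convex_univ).inf
      (concaveOn_univ_of_affine (-β) ((d - j * e) * β) fun x => by ring)
  have hlast : ConcaveOn ℝ Set.univ fun x : ℝ => min ((c - x) * α) ((d - (x + l * e)) * β) :=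
    (concaveOn_univ_of_affine (-α) (c * α) fun x => by ring).inf
      (concaveOn_univ_of_affine (-β) ((d - l * e) * β) fun x => by ring)
  exact (hfirst.add hmid).add hlast

theorem sum_take_succ_cons_replicate_append (a e b l j : ℕ) (hj : j ≤ l) :
    ((a :: (List.replicate l e ++ [b])).take (j + 1)).sum = a + j * e := by
  rw [List.take_succ_cons, List.take_append_of_le_length (by simpa using hj), List.take_replicate,
    min_eq_left hj]
  simp [mul_comm]

theorem cutF_cons_replicate_append (α β : ℝ) {a b c : ℕ} (d e l : ℕ) (h : a + b = c) :
    cutF α β d (a :: (List.replicate l e ++ [b])) = cutProfile α β d e c l a := by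
  have hb : (b : ℝ) = c - a := by rw [← h]; push_cast; ring
  unfold cutF cutProfile
  rw [show (a :: (List.replicate l e ++ [b])).length = l + 2 by simp, sum_range_succ,
    sum_range_succ', sum_take_succ_cons_replicate_append a e b l l le_rfl,
    add_comm (∑ k ∈ range l, _)]
  congr 2
  · simp
  · refine sum_congr rfl fun j hj => ?_
    rw [mem_range] at hj
    rw [sum_take_succ_cons_replicate_append a e b l j hj.le]
    simp [hj, List.getElem?_append_left]
  · simp [hb]
  · push_cast; ring

theorem stmt1_general (α β : ℝ)
    (u₁ u₂ d e s l : ℕ) (hsum : u₁ + u₂ = e + s)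
    (hu₁ : u₁ ≤ e) (hu₂ : u₂ ≤ e) :
    cutF α β d (u₁ :: (List.replicate l e ++ [u₂])) ≥
      min (cutF α β d (s :: List.replicate (l + 1) e))
          (cutF α β d (List.replicate (l + 1) e ++ [s])) := by
  have hs_le_u₁ : (s : ℝ) ≤ u₁ := by exact_mod_cast (show s ≤ u₁ by omega)
  rw [show List.replicate (l + 1) e ++ [s] = e :: (List.replicate l e ++ [s]) from rfl,
    List.replicate_succ', cutF_cons_replicate_append α β d e l hsum,
    cutF_cons_replicate_append α β d e l (add_comm s e), cutF_cons_replicate_append α β d e l rfl]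
  exact (concaveOn_cutProfile _ _ _ _ _ l).min_le_of_mem_Icc trivial trivial
    ⟨hs_le_u₁, by exact_mod_cast hu₁⟩

theorem stmt1 (α β : ℝ) (hα : 0 ≤ α) (hβ : 0 ≤ β)
    (u₁ u₂ d e s l : ℕ) (hsum : u₁ + u₂ = e + s)
    (hu₁ : u₁ ≤ e) (hu₂ : u₂ ≤ e) (hs : s ≤ e) :
    cutF α β d (u₁ :: (List.replicate l e ++ [u₂])) ≥
      min (cutF α β d (s :: List.replicate (l + 1) e))
          (cutF α β d (List.replicate (l + 1) e ++ [s])) :=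
  stmt1_general α β u₁ u₂ d e s l hsum hu₁ hu₂
end

section
/- Let k, d, e be positive integers with e < k and d ≥ k, write k = η·e + r with 0 < r < e. For any positive integer g and any sequence of integers u₁,…,u_g with 1 ≤ u_i ≤ e for all i and Σ u_i = k, one has (d − k)·g + Σ_{i=1}^{g} i·u_i ≥ (d − k)·(η+1) + Σ_{i=1}^{η} i·e + (η+1)·r. In other words, the integer program minimize (d−k)·g + Σ i·u_i subject to 1 ≤ u_i ≤ e and Σ u_i = k is minimized by the sequence (e, e, …, e, r) with η copies of e followed by r. -/
lemma key_abel (u : List ℕ) :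
    ∑ i ∈ Finset.range u.length, ((i : ℤ) + 1) * (u.getD i 0 : ℤ)
      = ∑ j ∈ Finset.range u.length, ((u.sum : ℤ) - ((u.take j).sum : ℤ)) := by
  induction u using List.reverseRecOn with
  | nil => simp
  | append_singleton l a ih =>
    simp only [List.length_append, List.length_singleton]
    rw [Finset.sum_range_succ, Finset.sum_range_succ]
    have hL : ∑ i ∈ Finset.range l.length, ((i : ℤ) + 1) * ((l ++ [a]).getD i 0 : ℤ)
        = ∑ i ∈ Finset.range l.length, ((i : ℤ) + 1) * (l.getD i 0 : ℤ) := by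
      refine Finset.sum_congr rfl fun i hi => ?_
      rw [List.getD_append _ _ _ _ (Finset.mem_range.mp hi)]
    have hR : ∑ j ∈ Finset.range l.length, (((l ++ [a]).sum : ℤ) - (((l ++ [a]).take j).sum : ℤ))
        = ∑ j ∈ Finset.range l.length, (((l.sum : ℤ) + a) - ((l.take j).sum : ℤ)) := by
      refine Finset.sum_congr rfl fun j hj => ?_
      rw [List.take_append_of_le_length (le_of_lt (Finset.mem_range.mp hj)), List.sum_append]
      simp only [List.sum_cons, List.sum_nil, add_zero, Nat.cast_add]
    rw [hL, hR, ih]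
    have h2 : (l ++ [a]).getD l.length 0 = a := by
      rw [List.getD_append_right _ _ _ _ le_rfl]
      simp
    have h3 : (l ++ [a]).take l.length = l := by
      simp [List.take_append_of_le_length]
    rw [h2, h3]
    simp only [List.sum_append, List.sum_cons, List.sum_nil, add_zero, Nat.cast_add,
      Finset.sum_sub_distrib, Finset.sum_add_distrib, Finset.sum_const, Finset.card_range,
      nsmul_eq_mul]
    ring

theorem stmt2 (k d e η r : ℕ) (he : 0 < e) (hek : e < k) (hkd : k ≤ d)
    (hk : k = η * e + r) (hr0 : 0 < r) (hre : r < e)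
    (u : List ℕ) (hg : u ≠ []) (hbounds : ∀ x ∈ u, 1 ≤ x ∧ x ≤ e)
    (husum : u.sum = k) :
    ((d : ℤ) - k) * u.length
        + ∑ i ∈ Finset.range u.length, ((i : ℤ) + 1) * (u.getD i 0 : ℤ) ≥
      ((d : ℤ) - k) * (η + 1)
        + (∑ i ∈ Finset.range η, ((i : ℤ) + 1) * (e : ℤ)) + ((η : ℤ) + 1) * r := by
  set g := u.length with hglen
  -- take-sum bounds
  have hSk : ∀ j, (u.take j).sum ≤ k := by
    intro j
    calc (u.take j).sum ≤ (u.take j).sum + (u.drop j).sum := Nat.le_add_right _ _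
      _ = u.sum := by rw [← List.sum_append, List.take_append_drop]
      _ = k := husum
  have hSje : ∀ j, (u.take j).sum ≤ j * e := by
    intro j
    calc (u.take j).sum ≤ (u.take j).length * e := by
          refine List.sum_le_card_nsmul _ _ fun x hx => (hbounds x (List.mem_of_mem_take hx)).2
      _ ≤ j * e := Nat.mul_le_mul_right e (by simp [List.length_take])
  -- g ≥ η + 1
  have hge : η + 1 ≤ g := by
    by_contra h
    push_neg at h
    have : u.sum ≤ g * e := by
      have := List.sum_le_card_nsmul u e fun x hx => (hbounds x hx).2
      simpa [hglen] using this
    have h1 : g * e ≤ η * e := Nat.mul_le_mul_right e (Nat.lt_succ_iff.mp h)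
    omega
  -- rewrite LHS
  have hLHS : ((d : ℤ) - k) * g + ∑ i ∈ Finset.range g, ((i : ℤ) + 1) * (u.getD i 0 : ℤ)
      = ∑ j ∈ Finset.range g, ((d : ℤ) - ((u.take j).sum : ℤ)) := by
    rw [key_abel, husum]
    rw [Finset.sum_sub_distrib, Finset.sum_sub_distrib, Finset.sum_const, Finset.sum_const,
      Finset.card_range, ← hglen]
    simp only [nsmul_eq_mul]
    ring
  rw [ge_iff_le, hLHS]
  have step1 : ∑ j ∈ Finset.range (η + 1), ((d : ℤ) - ((u.take j).sum : ℤ))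
      ≤ ∑ j ∈ Finset.range g, ((d : ℤ) - ((u.take j).sum : ℤ)) := by
    refine Finset.sum_le_sum_of_subset_of_nonneg (Finset.range_subset_range.mpr hge) ?_
    intro j _ _
    have := hSk j
    have : ((u.take j).sum : ℤ) ≤ (d : ℤ) := by exact_mod_cast le_trans this hkd
    linarith
  have step2 : ∑ j ∈ Finset.range (η + 1), ((d : ℤ) - (j : ℤ) * e)
      ≤ ∑ j ∈ Finset.range (η + 1), ((d : ℤ) - ((u.take j).sum : ℤ)) := by
    refine Finset.sum_le_sum fun j _ => ?_
    have := hSje j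
    have : ((u.take j).sum : ℤ) ≤ (j : ℤ) * e := by exact_mod_cast this
    linarith
  refine le_trans (le_trans (le_of_eq ?_) step2) step1
  -- equality of closed forms
  have hA : ∑ j ∈ Finset.range (η + 1), (j : ℤ) = ∑ i ∈ Finset.range η, ((i : ℤ) + 1) := by
    rw [Finset.sum_range_succ' (fun j => (j : ℤ))]
    push_cast
    ring
  have hGauss : (∑ j ∈ Finset.range (η + 1), (j : ℤ)) * 2 = ((η : ℤ) + 1) * η := by
    have h := Finset.sum_range_id_mul_two (η + 1)
    simp only [Nat.add_sub_cancel] at h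
    rw [← Nat.cast_sum]
    exact_mod_cast h
  have hkZ : (k : ℤ) = (η : ℤ) * e + r := by exact_mod_cast hk
  rw [Finset.sum_sub_distrib, Finset.sum_const, Finset.card_range, ← Finset.sum_mul, ← hA,
    nsmul_eq_mul]
  have hmul : ∑ x ∈ Finset.range (η + 1), (x : ℤ) * e
      = (∑ j ∈ Finset.range (η + 1), (j : ℤ)) * e := (Finset.sum_mul ..).symm
  push_cast
  linear_combination (e : ℤ) * hGauss - ((η : ℤ) + 1) * hkZ + hmul
end

section
/- Let α, β ≥ 0 be reals and let d, e, j be non-negative integers with d ≥ j·e + e − 1. Then Σ_{i=0}^{e−1} min(α, (d − i − j·e)·β) ≤ min(e·α, (d − j·e)·e·β). Consequently, summing over j, if α, β₁, β_e ≥ 0 satisfy Σ_{j=0}^{η·e−1} min(α, (d−j)·β₁) = Σ_{j=0}^{η−1} min(e·α, (d−j·e)·β_e) with each term of the right-hand sum at least the corresponding grouped terms, then centralized repair bandwidth satisfies β_e ≤ e·β₁ in the sense that Σ_{j=0}^{η−1} min(e·α, (d−j·e)·β_e) ≤ Σ_{j=0}^{η−1} min(e·α, (d−j·e)·e·β₁).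 -/
lemma regroup_aux (f : ℕ → ℝ) (n e : ℕ) :
    ∑ j ∈ Finset.range (n * e), f j =
      ∑ j ∈ Finset.range n, ∑ i ∈ Finset.range e, f (i + j * e) := by
  induction n with
  | zero => simp
  | succ n ih =>
      rw [Nat.succ_mul, Finset.sum_range_add, ih, Finset.sum_range_succ]
      simp [add_comm]

lemma min_group_aux (α β : ℝ) (hβ : 0 ≤ β) (d e j : ℕ) :
    ∑ i ∈ Finset.range e, min α (((d : ℝ) - i - j * e) * β) ≤
      min ((e : ℝ) * α) (((d : ℝ) - j * e) * (e : ℝ) * β) := by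
  apply le_min
  · calc ∑ i ∈ Finset.range e, min α (((d : ℝ) - i - j * e) * β)
        ≤ ∑ _i ∈ Finset.range e, α :=
          Finset.sum_le_sum fun i _ => min_le_left _ _
      _ = (e : ℝ) * α := by simp [mul_comm]
  · calc ∑ i ∈ Finset.range e, min α (((d : ℝ) - i - j * e) * β)
        ≤ ∑ _i ∈ Finset.range e, ((d : ℝ) - j * e) * β :=
          Finset.sum_le_sum fun i _ => (min_le_right _ _).trans
            (mul_le_mul_of_nonneg_right (by
              have : (0 : ℝ) ≤ (i : ℝ) := Nat.cast_nonneg i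
              linarith) hβ)
      _ = ((d : ℝ) - j * e) * (e : ℝ) * β := by
          rw [Finset.sum_const, Finset.card_range]
          push_cast; ring

theorem stmt8 (α β β₁ βe : ℝ) (hα : 0 ≤ α) (hβ : 0 ≤ β) (hβ₁ : 0 ≤ β₁)
    (hβe : 0 ≤ βe) (d e η : ℕ) (he : 1 ≤ e) (hη : 1 ≤ η) (hd : η * e ≤ d) :
    (∀ j : ℕ, j * e + e - 1 ≤ d →
      ∑ i ∈ Finset.range e, min α (((d : ℝ) - i - j * e) * β) ≤
        min ((e : ℝ) * α) (((d : ℝ) - j * e) * (e : ℝ) * β))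
    ∧ ((∑ j ∈ Finset.range (η * e), min α (((d : ℝ) - j) * β₁) =
          ∑ j ∈ Finset.range η, min ((e : ℝ) * α) (((d : ℝ) - j * e) * βe)) →
        (∀ j ∈ Finset.range η,
          ∑ i ∈ Finset.range e, min α (((d : ℝ) - (i + j * e)) * β₁) ≤
            min ((e : ℝ) * α) (((d : ℝ) - j * e) * βe)) →
        ∑ j ∈ Finset.range η, min ((e : ℝ) * α) (((d : ℝ) - j * e) * βe) ≤
          ∑ j ∈ Finset.range η, min ((e : ℝ) * α) (((d : ℝ) - j * e) * (e : ℝ) * β₁)) := by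
  constructor
  · intro j _
    exact min_group_aux α β hβ d e j
  · intro heq _
    rw [← heq, regroup_aux]
    apply Finset.sum_le_sum
    intro j _
    have h := min_group_aux α β₁ hβ₁ d e j
    refine le_trans (le_of_eq ?_) h
    apply Finset.sum_congr rfl
    intro i _
    push_cast
    ring_nf
end

section
/- Let M, d, e, k be positive reals with k = η·e + r, η a positive integer, 1 ≤ r < e, and d ≥ k, and assume 2d − k + e > 0 and d·(η+1) − e·(η+1)·η/2 > 0. Then γ_MBMR < γ_MBCR, where γ_MBMR = d·M / (d·(η+1) − e·η·(η+1)/2) and γ_MBCR = 2·d·e·M / (k·(2d − k + e)). -/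
theorem stmt12 (M d e r k : ℝ) (η : ℕ) (hM : 0 < M) (hd : 0 < d) (he : 0 < e)
    (hη : 1 ≤ η) (hr1 : 1 ≤ r) (hre : r < e) (hk : k = (η : ℝ) * e + r)
    (hdk : k ≤ d) (hden1 : 0 < 2 * d - k + e)
    (hden2 : 0 < d * ((η : ℝ) + 1) - e * (((η : ℝ) + 1) * (η : ℝ) / 2)) :
    d * M / (d * ((η : ℝ) + 1) - e * ((η : ℝ) * ((η : ℝ) + 1) / 2)) <
      2 * d * e * M / (k * (2 * d - k + e)) := by
  have hη1 : (1 : ℝ) ≤ (η : ℝ) := by exact_mod_cast hη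
  have hk0 : 0 < k := by nlinarith
  have hA : 0 < d * ((η : ℝ) + 1) - e * ((η : ℝ) * ((η : ℝ) + 1) / 2) := by nlinarith
  have hB : 0 < k * (2 * d - k + e) := mul_pos hk0 hden1
  rw [div_lt_div_iff₀ hA hB]
  have core : k * (2 * d - k + e) <
      2 * e * (d * ((η : ℝ) + 1) - e * ((η : ℝ) * ((η : ℝ) + 1) / 2)) := by
    nlinarith [mul_nonneg (sub_nonneg.mpr hdk) (sub_pos.mpr hre).le,
      mul_pos (lt_of_lt_of_le one_pos hr1) (sub_pos.mpr hre)]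
  nlinarith [mul_lt_mul_of_pos_left core (mul_pos hd hM)]
end

section
/- Let α, β ≥ 0 be reals, k ≤ e positive integers, and d a non-negative integer. For every positive integer g and every integer sequence u₁,…,u_g with 1 ≤ u_i ≤ e and Σ u_i = k, one has Σ_{i=1}^{g} min(u_i·α, (d − Σ_{j<i} u_j)·β) ≥ min(k·α, d·β). In other words, when k ≤ e the minimum cut over all repair scenarios equals min(k·α, d·β), attained by the single-group scenario u = (k). -/
/-- Recursive form of the cut function with a real remaining capacity. -/
def auxCut (α β : ℝ) : ℝ → List ℕ → ℝ
  | _, [] => 0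
  | D, a :: t => min ((a : ℝ) * α) (D * β) + auxCut α β (D - a) t

lemma auxCut_eq (α β : ℝ) : ∀ (u : List ℕ) (D : ℝ),
    auxCut α β D u = ∑ i ∈ Finset.range u.length,
      min ((u.getD i 0 : ℝ) * α) ((D - ((u.take i).sum : ℕ)) * β)
  | [], D => by simp [auxCut]
  | a :: t, D => by
    rw [List.length_cons, Finset.sum_range_succ']
    have ih := auxCut_eq α β t (D - a)
    simp only [auxCut, ih, List.getD_cons_succ, List.take_succ_cons, List.sum_cons,
      List.getD_cons_zero, List.take_zero, List.sum_nil, Nat.cast_zero, sub_zero,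
      Nat.cast_add]
    rw [add_comm]
    congr 1
    refine Finset.sum_congr rfl fun i _ => ?_
    congr 1
    ring

lemma auxCut_ge (α β : ℝ) (hα : 0 ≤ α) (hβ : 0 ≤ β) :
    ∀ (u : List ℕ) (D : ℝ), (u.sum : ℝ) ≤ D →
      auxCut α β D u ≥ min ((u.sum : ℝ) * α) (D * β)
  | [], D => by
    intro hD
    simp only [List.sum_nil, Nat.cast_zero, zero_mul, auxCut]
    have : 0 ≤ D * β := mul_nonneg (by simpa using hD) hβ
    simp [min_le_iff]
  | a :: t, D => by
    intro hD
    simp only [List.sum_cons, Nat.cast_add] at hD ⊢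
    have hs' : (0:ℝ) ≤ (t.sum : ℝ) := Nat.cast_nonneg _
    have ha : (0:ℝ) ≤ (a : ℝ) := Nat.cast_nonneg _
    have hD' : (t.sum : ℝ) ≤ D - a := by linarith
    have ih := auxCut_ge α β hα hβ t (D - a) hD'
    have hDpos : 0 ≤ D := by linarith
    show min ((a : ℝ) * α) (D * β) + auxCut α β (D - a) t ≥ _
    rcases le_or_gt ((a : ℝ) * α) (D * β) with h1 | h1
    · rcases le_or_gt ((t.sum : ℝ) * α) ((D - a) * β) with h2 | h2
      · calc min ((a:ℝ)*α) (D*β) + auxCut α β (D - a) t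
            ≥ (a:ℝ)*α + ((t.sum:ℝ)*α) := by
              rw [min_eq_left h1]
              have hm := min_eq_left h2
              linarith [ih, hm]
          _ = ((a:ℝ) + t.sum) * α := by ring
          _ ≥ min (((a:ℝ) + t.sum) * α) (D * β) := min_le_left _ _
      · -- β < α on this range: (t.sum)*α > (D-a)*β with t.sum ≤ D-a
        have hab : (a:ℝ) * β ≤ (a:ℝ) * α := by
          rcases eq_or_lt_of_le hs' with hz | hz
          · -- t.sum = 0, then h2 : 0 > (D-a)*β, but D-a ≥ 0 and β ≥ 0, contradiction
            exfalso
            have : (0:ℝ) ≤ (D - a) * β := mul_nonneg (by linarith) hβ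
            rw [← hz] at h2; simp at h2; linarith
          · have hβα : β ≤ α := by
              by_contra hc
              push_neg at hc
              have : (t.sum:ℝ) * α ≤ (D - a) * α := by nlinarith
              nlinarith
            exact mul_le_mul_of_nonneg_left hβα ha
        calc min ((a:ℝ)*α) (D*β) + auxCut α β (D - a) t
            ≥ (a:ℝ)*α + (D - a)*β := by
              rw [min_eq_left h1]
              have hm := min_eq_right (le_of_lt h2)
              linarith [ih, hm]
          _ ≥ D * β := by nlinarith
          _ ≥ min (((a:ℝ) + t.sum) * α) (D * β) := min_le_right _ _
    · have h3 : min ((a:ℝ)*α) (D*β) = D*β := min_eq_right (le_of_lt h1)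
      have haux : auxCut α β (D - a) t ≥ 0 := by
        have := ih
        have hmin : (0:ℝ) ≤ min ((t.sum:ℝ) * α) ((D - a) * β) :=
          le_min (mul_nonneg hs' hα) (mul_nonneg (by linarith) hβ)
        linarith
      calc min ((a:ℝ)*α) (D*β) + auxCut α β (D - a) t
          ≥ D * β := by rw [h3]; linarith
        _ ≥ min (((a:ℝ) + t.sum) * α) (D * β) := min_le_right _ _

theorem stmt16 (α β : ℝ) (hα : 0 ≤ α) (hβ : 0 ≤ β) (k e d : ℕ)
    (hk : 0 < k) (hke : k ≤ e) (hkd : k ≤ d)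
    (u : List ℕ) (hg : u ≠ []) (hbounds : ∀ x ∈ u, 1 ≤ x ∧ x ≤ e)
    (husum : u.sum = k) :
    cutF α β d u ≥ min ((k : ℝ) * α) ((d : ℝ) * β) := by
  have h1 : cutF α β d u = auxCut α β (d : ℝ) u := by
    rw [cutF, auxCut_eq]
  have h2 := auxCut_ge α β hα hβ u (d : ℝ) (by rw [husum]; exact_mod_cast hkd)
  rw [husum] at h2
  rw [h1]
  exact h2
end

section
/- Let F be a field of characteristic zero (or of characteristic p > 2 with p not dividing e − 2), and let e ≥ 3. Let C be the e(e−1) × e(e−1) matrix over F with rows/columns indexed by ordered pairs (i,j), i ≠ j in {1,…,e}, defined by C_{(i,j),(i,j)} = −1, C_{(i,j),(l,i)} = 1 for every l ≠ i with (l,i) ≠ (i,j), and all other entries 0. Then det C = (e−2)·(−2)^{e−1}·(−1)^{e(e−2)}, and in particular det C ≠ 0. -/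
/-!
The rows of `C` are indexed by the arcs `(i, j)` of the complete digraph on `e` vertices, and
`C + 1 = S * T` factors through the vertices, with `S (i, j) k = [i = k]` and
`T k (l, m) = [k = m]`. The other product `T * S = J - 1` is the adjacency matrix of the complete
graph, so the Weinstein–Aronszajn identity gives `det (1 - S * T) = det (1 - T * S) = det (2 - J)`,
which the matrix determinant lemma evaluates as `2 ^ (e - 1) * (2 - e)`. The sign
`(-1) ^ (e * (e - 1))` from `det C = det (-(1 - S * T))` is `1`.
-/

open Matrix

section Ones

variable {K : Type*} [Field K] {n : Type*} [Fintype n] [DecidableEq n]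

theorem det_smul_one_sub_ones [Nonempty n] {a : K} (ha : a ≠ 0) :
    det (a • 1 - of fun _ _ : n => (1 : K)) =
      a ^ (Fintype.card n - 1) * (a - Fintype.card n) := by
  have hrankOne : a • 1 - of (fun _ _ : n => (1 : K)) =
      a • (1 + replicateCol Unit (fun _ : n => -a⁻¹) *
        replicateRow Unit (fun _ : n => (1 : K))) := by
    ext i j
    simp only [Matrix.sub_apply, Matrix.smul_apply, Matrix.add_apply, one_apply, of_apply,
      mul_apply, replicateCol_apply, replicateRow_apply, Finset.univ_unique, Finset.sum_singleton]
    split_ifs <;> simp [mul_add, ha, sub_eq_add_neg]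
  obtain ⟨k, hk⟩ := Nat.exists_eq_add_one.mpr (Fintype.card_pos (α := n))
  rw [hrankOne, det_smul, det_one_add_replicateCol_mul_replicateRow, hk]
  simp [dotProduct, hk]
  field_simp
  ring

end Ones

abbrev Arc (ι : Type*) := {p : ι × ι // p.1 ≠ p.2}

section Arcs

variable (R : Type*) [CommRing R] (ι : Type*) [Fintype ι] [DecidableEq ι]

def arcSource : Matrix (Arc ι) ι R := of fun p k => if p.1.1 = k then 1 else 0

def arcTarget : Matrix ι (Arc ι) R := of fun k q => if k = q.1.2 then 1 else 0

theorem arcTarget_mul_arcSource :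
    arcTarget R ι * arcSource R ι = of (fun _ _ => 1) - 1 := by
  ext k l
  simp only [mul_apply, Matrix.sub_apply, one_apply, of_apply, arcSource, arcTarget]
  by_cases hkl : k = l
  · subst hkl
    rw [if_pos rfl, sub_self]
    refine Finset.sum_eq_zero fun q _ => ?_
    have hq := q.2
    split_ifs <;> simp_all
  · rw [Finset.sum_eq_single ⟨(l, k), Ne.symm hkl⟩] <;> simp [hkl]
    exact fun a b _ hne ha hb => (hne ha hb.symm).elim

theorem card_arc : Fintype.card (Arc ι) = Fintype.card ι * (Fintype.card ι - 1) := by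
  have : (Finset.univ.filter fun p : ι × ι => p.1 ≠ p.2) = Finset.univ.offDiag := by ext; simp
  rw [Fintype.card_subtype, this, Finset.offDiag_card, Finset.card_univ, Nat.mul_sub_one]

variable {R ι}

theorem arcSource_mul_arcTarget_apply (p q : Arc ι) :
    (arcSource R ι * arcTarget R ι) p q = if p.1.1 = q.1.2 then 1 else 0 := by
  simp [arcSource, arcTarget, mul_apply]

theorem det_arcSource_mul_arcTarget_sub_one {K : Type*} [Field K] [Nonempty ι]
    (h2 : (2 : K) ≠ 0) :
    det (arcSource K ι * arcTarget K ι - 1) =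
      2 ^ (Fintype.card ι - 1) * ((2 : K) - Fintype.card ι) := by
  have hcomplete : 1 - arcTarget K ι * arcSource K ι = (2 : K) • 1 - of fun _ _ => 1 := by
    rw [arcTarget_mul_arcSource, two_smul]
    abel
  rw [← neg_sub, det_neg, card_arc, (Nat.even_mul_pred_self _).neg_one_pow, one_mul,
    det_one_sub_mul_comm, hcomplete, det_smul_one_sub_ones h2]

end Arcs

theorem stmt18 (F : Type*) [Field F] (e : ℕ) (he : 3 ≤ e)
    (hchar2 : (2 : F) ≠ 0) (hche : (e : F) - 2 ≠ 0)
    (C : Matrix {p : Fin e × Fin e // p.1 ≠ p.2} {p : Fin e × Fin e // p.1 ≠ p.2} F)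
    (hC : ∀ p q, C p q =
      if q = p then -1 else if (q : Fin e × Fin e).2 = (p : Fin e × Fin e).1 then 1 else 0) :
    C.det = ((e : F) - 2) * (-2) ^ (e - 1) * (-1) ^ (e * (e - 2)) ∧ C.det ≠ 0 := by
  have hCeq : C = arcSource F (Fin e) * arcTarget F (Fin e) - 1 := by
    ext p q
    rw [hC, Matrix.sub_apply, arcSource_mul_arcTarget_apply, one_apply]
    by_cases hqp : q = p
    · subst hqp
      simp [q.2]
    · simp [hqp, Ne.symm hqp, eq_comm]
  have : Nonempty (Fin e) := ⟨⟨0, by omega⟩⟩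
  have hdet : C.det = 2 ^ (e - 1) * (2 - e) := by
    rw [hCeq, det_arcSource_mul_arcTarget_sub_one hchar2, Fintype.card_fin]
  have hodd : Odd (e - 1 + e * (e - 2)) := by
    obtain ⟨m, rfl⟩ := Nat.exists_eq_add_of_le' he
    simp [parity_simps]
  have hsign : ((e : F) - 2) * (-2) ^ (e - 1) * (-1) ^ (e * (e - 2)) = 2 ^ (e - 1) * (2 - e) := by
    rw [neg_pow, mul_comm ((-1 : F) ^ _), mul_assoc, mul_assoc, ← pow_add, hodd.neg_one_pow]
    ring
  refine ⟨hdet.trans hsign.symm, ?_⟩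
  rw [hdet]
  exact mul_ne_zero (pow_ne_zero _ hchar2) (by rwa [← neg_sub, neg_ne_zero])
end
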